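/- arXiv:2006.13701 — 7 statements merged into one kernel-verified Lean document; each statement's English description precedes it below -/
import Mathlib

section
/- Let K be an n×n real symmetric positive definite matrix and α > 0. For a subset C ⊆ {1,…,n}, assign it the probability Pr(C) = det((K/α)_{CC}) / det(I + K/α) (with the convention det of the empty submatrix equals 1). Then the expectation over subsets sampled with these probabilities satisfies ∑_{C ⊆ {1,…,n}} Pr(C) · C K_{CC}^{-1} Cᵀ = (K + αI)^{-1}, where for the empty subset the matrix C K_{CC}^{-1} Cᵀ is the n×n zero matrix. -/
open Matrix BigOperators Finset

/-- The `n × |C|` sampling matrix obtained by selecting the columns of the identity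
matrix indexed by `C`. -/
def sampMatrix {n : ℕ} (C : Finset (Fin n)) : Matrix (Fin n) {x // x ∈ C} ℝ :=
  fun i j => if i = (j : Fin n) then 1 else 0

/-- The principal submatrix `K_{CC}` of `K` with rows and columns indexed by `C`. -/
def principalSub {n : ℕ} (K : Matrix (Fin n) (Fin n) ℝ) (C : Finset (Fin n)) :
    Matrix {x // x ∈ C} {x // x ∈ C} ℝ :=
  fun i j => K i j


/-!
Rows of `M + diagonal d` are `M i + d i • eᵢ`, so multilinearity of the determinant expands
`det (M + diagonal d)` over subsets `s` as `∑ₛ (∏_{i ∉ s} d i) · det M_{ss}`. The cofactor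
`adj (K + αI) i j` is the determinant of `K + αI` with row `j` replaced by `eᵢ`, which is
again a diagonal perturbation (with a zero at position `j`), and the expansion becomes
`adj (K + αI) = ∑_C α^{|Cᶜ|} · C adj(K_{CC}) Cᵀ`. The DPP weight of `C` equals
`α^{|Cᶜ|} det K_{CC} / det (K + αI)`, and every `K_{CC}` is invertible because `K` is positive
definite, so `det K_{CC} · K_{CC}⁻¹ = adj K_{CC}` and the sum collapses to
`adj (K + αI) / det (K + αI) = (K + αI)⁻¹`.
-/

namespace Matrix

theorem submatrix_updateRow_of_mem {ι α : Type*} [DecidableEq ι] (M : Matrix ι ι α)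
    {s : Finset ι} {j : ι} (hj : j ∈ s) (v : ι → α) :
    (M.updateRow j v).submatrix ((↑) : s → ι) ((↑) : s → ι) =
      (M.submatrix ((↑) : s → ι) ((↑) : s → ι)).updateRow ⟨j, hj⟩ fun l => v l := by
  ext k l
  by_cases hk : k = ⟨j, hj⟩
  · subst hk
    simp
  · simp [hk, updateRow_ne fun h : (k : ι) = j => hk (Subtype.ext h)]

variable {ι R : Type*} [Fintype ι] [DecidableEq ι] [CommRing R]

theorem det_add_diagonal (M : Matrix ι ι R) (d : ι → R) :
    (M + diagonal d).det =
      ∑ s : Finset ι, (∏ i ∈ sᶜ, d i) * (M.submatrix (↑) (↑) : Matrix s s R).det := by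
  have hrows : (M + diagonal d).det =
      detRowAlternating (M.row + fun i => d i • (1 : Matrix ι ι R).row i) := by
    congr 1
    ext i j
    simp [diagonal_apply, one_apply]
  rw [hrows, detRowAlternating.map_add_univ]
  refine Finset.sum_congr rfl fun s _ => ?_
  have hscale : s.piecewise M.row (fun i => d i • (1 : Matrix ι ι R).row i) =
      fun i => (if i ∈ s then 1 else d i) • s.piecewise M.row (1 : Matrix ι ι R).row i := by
    funext i
    by_cases hi : i ∈ s <;> simp [hi]
  rw [hscale, detRowAlternating.map_smul_univ, ← det_piecewise_one_eq_submatrix_det, smul_eq_mul]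
  congr 1
  rw [← Finset.prod_compl_mul_prod s, Finset.prod_ite_of_false fun i hi => Finset.mem_compl.mp hi,
    Finset.prod_ite_of_true fun i hi => hi, Finset.prod_const_one, mul_one]

theorem adjugate_add_smul_one_apply (M : Matrix ι ι R) (a : R) (i j : ι) :
    (M + a • (1 : Matrix ι ι R)).adjugate i j =
      ∑ s : Finset ι, a ^ sᶜ.card *
        if h : i ∈ s ∧ j ∈ s then
          (M.submatrix (↑) (↑) : Matrix s s R).adjugate ⟨i, h.1⟩ ⟨j, h.2⟩
        else 0 := by
  have hsplit : (M + a • (1 : Matrix ι ι R)).updateRow j (Pi.single i 1) =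
      M.updateRow j (Pi.single i 1) + diagonal (Function.update (fun _ => a) j 0) := by
    ext k l
    by_cases hk : k = j
    · subst hk
      simp [diagonal_apply]
    · simp [hk, updateRow_ne, one_apply, diagonal_apply]
  rw [adjugate_apply, hsplit, det_add_diagonal]
  refine Finset.sum_congr rfl fun s _ => ?_
  by_cases hj : j ∈ s
  · have hprod : ∏ k ∈ sᶜ, Function.update (fun _ => a) j 0 k = a ^ sᶜ.card :=
      Finset.prod_eq_pow_card fun k hk =>
        Function.update_of_ne (fun hkj : k = j => Finset.mem_compl.mp hk (hkj ▸ hj)) _ _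
    rw [hprod, submatrix_updateRow_of_mem M hj]
    by_cases hi : i ∈ s
    · rw [dif_pos ⟨hi, hj⟩, adjugate_apply]
      congr 3
      ext l
      simp [Pi.single_apply, Subtype.ext_iff]
    · rw [dif_neg fun h => hi h.1, det_eq_zero_of_row_eq_zero ⟨j, hj⟩ fun l => ?_]
      rw [updateRow_self]
      exact Pi.single_eq_of_ne (fun h : (l : ι) = i => hi (h ▸ l.2)) _
  · rw [dif_neg fun h => hj h.2, Finset.prod_eq_zero (Finset.mem_compl.mpr hj) (by simp)]
    simp

end Matrix

section Sampling

variable {n : ℕ} {m : Type*} (C : Finset (Fin n))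

theorem sampMatrix_mul_apply (M : Matrix C m ℝ) (i : Fin n) (b : m) :
    (sampMatrix C * M) i b = if h : i ∈ C then M ⟨i, h⟩ b else 0 := by
  simp only [mul_apply, sampMatrix, ite_mul, one_mul, zero_mul]
  split_ifs with h
  · exact (Finset.sum_eq_single ⟨i, h⟩ (fun j _ hj => if_neg fun e => hj (Subtype.ext e.symm))
      (by simp)).trans (if_pos rfl)
  · exact Finset.sum_eq_zero fun j _ => if_neg fun (e : i = j) => h (e ▸ j.2)

theorem mul_sampMatrix_transpose_apply (M : Matrix m C ℝ) (a : m) (l : Fin n) :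
    (M * (sampMatrix C)ᵀ) a l = if h : l ∈ C then M a ⟨l, h⟩ else 0 := by
  rw [← transpose_transpose M, ← transpose_mul, transpose_apply, sampMatrix_mul_apply]
  rfl

theorem sampMatrix_mul_mul_transpose_apply (M : Matrix C C ℝ) (i l : Fin n) :
    (sampMatrix C * M * (sampMatrix C)ᵀ) i l =
      if h : i ∈ C ∧ l ∈ C then M ⟨i, h.1⟩ ⟨l, h.2⟩ else 0 := by
  rw [mul_sampMatrix_transpose_apply]
  by_cases hl : l ∈ C
  · rw [dif_pos hl, sampMatrix_mul_apply]
    by_cases hi : i ∈ C <;> simp [hi, hl]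
  · simp [hl]

end Sampling

section PrincipalSub

variable {n : ℕ} (K : Matrix (Fin n) (Fin n) ℝ)

theorem principalSub_eq_submatrix (C : Finset (Fin n)) :
    principalSub K C = K.submatrix (↑) (↑) :=
  rfl

theorem principalSub_smul (c : ℝ) (C : Finset (Fin n)) :
    principalSub (c • K) C = c • principalSub K C :=
  rfl

theorem adjugate_add_smul_one_eq_sum_sampMatrix (a : ℝ) :
    (K + a • (1 : Matrix (Fin n) (Fin n) ℝ)).adjugate =
      ∑ C : Finset (Fin n), a ^ Cᶜ.card •
        (sampMatrix C * (principalSub K C).adjugate * (sampMatrix C)ᵀ) := by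
  ext i l
  simp only [adjugate_add_smul_one_apply, Matrix.sum_apply, Matrix.smul_apply, smul_eq_mul,
    sampMatrix_mul_mul_transpose_apply, principalSub_eq_submatrix]

theorem det_principalSub_inv_smul_div_det_one_add_inv_smul {α : ℝ} (hα : α ≠ 0)
    (C : Finset (Fin n)) :
    (principalSub (α⁻¹ • K) C).det / (1 + α⁻¹ • K).det =
      α ^ Cᶜ.card * (principalSub K C).det / (K + α • 1).det := by
  have hscale : 1 + α⁻¹ • K = α⁻¹ • (K + α • 1) := by
    rw [smul_add, smul_smul, inv_mul_cancel₀ hα, one_smul, add_comm]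
  rw [hscale, principalSub_smul, det_smul, det_smul, Fintype.card_coe,
    ← Finset.card_compl_add_card C, pow_add]
  field_simp
  rw [mul_assoc, ← mul_pow, one_div_mul_cancel hα, one_pow, mul_one]

end PrincipalSub

theorem dpp_expectation_eq_inv_add_smul_one_general (n : ℕ) (K : Matrix (Fin n) (Fin n) ℝ)
    (hPD : K.PosDef) (α : ℝ) (hα : 0 < α) :
    ∑ C : Finset (Fin n),
        ((principalSub (α⁻¹ • K) C).det / (1 + α⁻¹ • K).det) •
          (sampMatrix C * (principalSub K C)⁻¹ * (sampMatrix C)ᵀ) =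
      (K + α • (1 : Matrix (Fin n) (Fin n) ℝ))⁻¹ := by
  rw [Matrix.inv_def, Ring.inverse_eq_inv, adjugate_add_smul_one_eq_sum_sampMatrix,
    Finset.smul_sum]
  refine Finset.sum_congr rfl fun C _ => ?_
  have hC : (principalSub K C).det ≠ 0 := (hPD.submatrix Subtype.val_injective).det_pos.ne'
  rw [det_principalSub_inv_smul_div_det_one_add_inv_smul K hα.ne', Matrix.inv_def,
    Ring.inverse_eq_inv, Matrix.mul_smul, Matrix.smul_mul, smul_smul, smul_smul]
  congr 1
  field_simp

/-- Implicit regularization for DPP sampling: if each subset `C` receives probability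
`det((K/α)_{CC}) / det(I + K/α)`, then the expectation of `C K_{CC}⁻¹ Cᵀ` equals
`(K + αI)⁻¹`. -/
theorem dpp_expectation_eq_inv_add_smul_one (n : ℕ) (K : Matrix (Fin n) (Fin n) ℝ)
    (hsymm : K.IsSymm) (hPD : K.PosDef) (α : ℝ) (hα : 0 < α) :
    ∑ C : Finset (Fin n),
        ((principalSub (α⁻¹ • K) C).det / (1 + α⁻¹ • K).det) •
          (sampMatrix C * (principalSub K C)⁻¹ * (sampMatrix C)ᵀ) =
      (K + α • (1 : Matrix (Fin n) (Fin n) ℝ))⁻¹ :=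
  dpp_expectation_eq_inv_add_smul_one_general n K hPD α hα
end

section
/- Let K be an n×n real symmetric positive definite matrix and α > 0, and for C ⊆ {1,…,n} let Pr(C) = det((K/α)_{CC}) / det(I + K/α). Then the expected subset size satisfies ∑_{C ⊆ {1,…,n}} Pr(C) · |C| = Tr(K(K + αI)^{-1}). -/
/-!
Expanding `det (1 + A)` multilinearly in the rows gives `∑_C det A_CC`. The diagonal cofactor
`adj (1 + A) i i` is the same expansion for `A` with row `i` zeroed, so it sums `det A_CC` over
the `C` avoiding `i`, and `tr adj (1 + A) = ∑_C |Cᶜ| det A_CC`. As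
`(1 + A) adj (1 + A) = det (1 + A)`, this gives `tr (A adj (1 + A)) = ∑_C |C| det A_CC`; divide
by `det (1 + A)` with `A = K/α`, and use `K + αI = α (I + K/α)`.
-/

open Matrix BigOperators Finset

namespace Matrix

variable {R ι : Type*} [DecidableEq ι]

theorem submatrix_updateRow_of_notMem (A : Matrix ι ι R) {i : ι} (v : ι → R) {s : Finset ι}
    (hi : i ∉ s) :
    ((A.updateRow i v).submatrix (↑) (↑) : Matrix s s R) = A.submatrix (↑) (↑) := by
  ext a b
  simp only [submatrix_apply, updateRow_ne (ne_of_mem_of_not_mem a.2 hi)]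

variable [CommRing R]

theorem one_add_updateRow_zero (A : Matrix ι ι R) (i : ι) :
    1 + A.updateRow i 0 = (1 + A).updateRow i (Pi.single i 1) := by
  ext k j
  obtain rfl | hk := eq_or_ne k i
  · simp [one_apply, Pi.single_apply, eq_comm]
  · simp [updateRow_ne hk]

variable [Fintype ι]

theorem det_one_add_eq_sum_det_submatrix (A : Matrix ι ι R) :
    (1 + A).det = ∑ s : Finset ι, (A.submatrix (↑) (↑) : Matrix s s R).det := by
  rw [add_comm]
  exact (detRowAlternating.map_add_univ A.row (row 1)).trans
    (sum_congr rfl fun s _ => det_piecewise_one_eq_submatrix_det A s)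

theorem adjugate_one_add_apply_self (A : Matrix ι ι R) (i : ι) :
    (1 + A).adjugate i i =
      ∑ s : Finset ι with i ∉ s, (A.submatrix (↑) (↑) : Matrix s s R).det := by
  rw [adjugate_apply, ← one_add_updateRow_zero, det_one_add_eq_sum_det_submatrix, sum_filter]
  refine sum_congr rfl fun s _ => ?_
  by_cases hi : i ∈ s
  · rw [if_neg (not_not_intro hi)]
    exact det_eq_zero_of_row_eq_zero ⟨i, hi⟩ fun _ => by simp
  · rw [if_pos hi, submatrix_updateRow_of_notMem A 0 hi]

theorem trace_adjugate_one_add (A : Matrix ι ι R) :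
    (1 + A).adjugate.trace =
      ∑ s : Finset ι, (#sᶜ : R) * (A.submatrix (↑) (↑) : Matrix s s R).det := by
  calc (1 + A).adjugate.trace
      = ∑ i, ∑ s : Finset ι with i ∉ s, (A.submatrix (↑) (↑) : Matrix s s R).det :=
        sum_congr rfl fun i _ => adjugate_one_add_apply_self A i
    _ = _ := by
      simp only [sum_filter]
      rw [sum_comm]
      refine sum_congr rfl fun s _ => ?_
      rw [← sum_filter, sum_const, nsmul_eq_mul, filter_notMem_eq_sdiff, compl_eq_univ_sdiff]

theorem sum_card_mul_det_submatrix (A : Matrix ι ι R) :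
    ∑ s : Finset ι, (#s : R) * (A.submatrix (↑) (↑) : Matrix s s R).det =
      (A * (1 + A).adjugate).trace := by
  have hmul : A * (1 + A).adjugate = (1 + A).det • 1 - (1 + A).adjugate := by
    rw [← mul_adjugate, add_mul, one_mul, add_sub_cancel_left]
  rw [hmul, trace_sub, trace_smul, trace_one, trace_adjugate_one_add,
    det_one_add_eq_sum_det_submatrix, smul_eq_mul, sum_mul, ← sum_sub_distrib]
  refine sum_congr rfl fun s _ => ?_
  rw [← card_add_card_compl s]
  push_cast
  ring

theorem trace_mul_inv_one_add {𝕜 : Type*} [Field 𝕜] (A : Matrix ι ι 𝕜) :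
    (A * (1 + A)⁻¹).trace =
      ∑ s : Finset ι, (A.submatrix (↑) (↑) : Matrix s s 𝕜).det / (1 + A).det * #s := by
  rw [inv_def, Ring.inverse_eq_inv', mul_smul_comm, trace_smul, ← sum_card_mul_det_submatrix,
    smul_eq_mul, mul_sum]
  refine sum_congr rfl fun s _ => ?_
  ring

end Matrix

theorem dpp_expected_size_eq_trace_general (n : ℕ) (K : Matrix (Fin n) (Fin n) ℝ)
    (hPD : K.PosDef) (α : ℝ) (hα : 0 < α) :
    ∑ C : Finset (Fin n),
        ((principalSub (α⁻¹ • K) C).det / (1 + α⁻¹ • K).det) * (C.card : ℝ) =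
      (K * (K + α • (1 : Matrix (Fin n) (Fin n) ℝ))⁻¹).trace := by
  set L := α⁻¹ • K with hL
  have hK : K = α • L := by rw [hL, smul_smul, mul_inv_cancel₀ hα.ne', one_smul]
  have hdet : IsUnit (1 + L).det :=
    (PosDef.one.add (hPD.smul (inv_pos.2 hα))).det_pos.ne'.isUnit
  have hinv : (K + α • (1 : Matrix (Fin n) (Fin n) ℝ))⁻¹ = α⁻¹ • (1 + L)⁻¹ := by
    rw [hK, ← smul_add, add_comm]
    exact inv_smul' _ (Units.mk0 α hα.ne') hdet
  rw [hinv, hK, smul_mul_smul_comm, mul_inv_cancel₀ hα.ne', one_smul, trace_mul_inv_one_add]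
  rfl

/-- Expected subset size of the DPP with L-ensemble `K/α`: if each subset `C` receives
probability `det((K/α)_{CC}) / det(I + K/α)`, then the expected cardinality equals
`Tr(K (K + αI)⁻¹)`. -/
theorem dpp_expected_size_eq_trace (n : ℕ) (K : Matrix (Fin n) (Fin n) ℝ)
    (hsymm : K.IsSymm) (hPD : K.PosDef) (α : ℝ) (hα : 0 < α) :
    ∑ C : Finset (Fin n),
        ((principalSub (α⁻¹ • K) C).det / (1 + α⁻¹ • K).det) * (C.card : ℝ) =
      (K * (K + α • (1 : Matrix (Fin n) (Fin n) ℝ))⁻¹).trace :=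
  dpp_expected_size_eq_trace_general n K hPD α hα
end

section
/- Let K be an n×n real symmetric positive definite matrix with spectral decomposition K = ∑_{ℓ=1}^{n} λ_ℓ v_ℓ v_ℓᵀ, where {v_1,…,v_n} is an orthonormal basis of eigenvectors with eigenvalues λ_1,…,λ_n > 0, and let 1 ≤ k ≤ n. Then ∑_{C ⊆ {1,…,n}, |C| = k} (det(K_{CC})/e_k(λ)) · C K_{CC}^{-1} Cᵀ = ∑_{ℓ=1}^{n} (e_{k−1}(λ̂_ℓ)/e_k(λ)) v_ℓ v_ℓᵀ, where λ = (λ_1,…,λ_n) and λ̂_ℓ ∈ ℝ^{n−1} is λ with the entry λ_ℓ removed. -/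
open Matrix BigOperators Finset

/-- The elementary symmetric polynomial of degree `j` in the entries of `f` indexed by
the subset `s` (with `e_0 = 1`).  Taking `s = univ.erase ℓ` gives `e_j` of the vector
with the `ℓ`-th entry removed. -/
def esymmOn {n : ℕ} (s : Finset (Fin n)) (j : ℕ) (f : Fin n → ℝ) : ℝ :=
  ∑ T ∈ s.powersetCard j, ∏ i ∈ T, f i

/-! Write `E_k(M)` for the sum of the `k × k` principal minors of `M` and
`N_k(M) = ∑_{|C| = k} C adj(M_CC) Cᵀ`. The matrix determinant lemma
`det (A + u wᵀ) = det A + wᵀ adj(A) u` shows that `N_k` is the gradient of `E_k`: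
`E_k(M + u wᵀ) = E_k(M) + wᵀ N_k(M) u`. As a coefficient of `det (1 + X M)`, `E_k` is invariant
under similarity, hence its gradient is equivariant: `N_k(P M P⁻¹) = P N_k(M) P⁻¹`. Writing
`K = Vᵀ diag(λ) V` reduces the claim to `N_k(diag λ) = diag(e_{k-1}(λ̂_ℓ))`, which follows from
`adj(diag d) = diag(∏_{j ≠ i} d_j)`; finally `det(K_CC) K_CC⁻¹ = adj(K_CC)` as `K_CC` is positive
definite. -/

namespace Matrix

variable {m R : Type*} [Fintype m]

section CommSemiring

variable [CommSemiring R]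

theorem dotProduct_mul_mul_transpose_mulVec {l : Type*} [Fintype l] (S : Matrix m l R)
    (A : Matrix l l R) (u w : m → R) :
    w ⬝ᵥ (S * A * Sᵀ) *ᵥ u = (Sᵀ *ᵥ w) ⬝ᵥ A *ᵥ (Sᵀ *ᵥ u) := by
  rw [← mulVec_mulVec, ← mulVec_mulVec, dotProduct_mulVec, ← mulVec_transpose]

theorem transpose_of_mul_diagonal_mul_of [DecidableEq m] (v : m → m → R) (c : m → R) :
    (of v)ᵀ * diagonal c * of v = ∑ ℓ, c ℓ • vecMulVec (v ℓ) (v ℓ) := by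
  ext i j
  rw [mul_apply, Matrix.sum_apply]
  refine sum_congr rfl fun ℓ _ => ?_
  simp only [mul_diagonal, transpose_apply, of_apply, smul_apply, vecMulVec_apply, smul_eq_mul]
  ring

end CommSemiring

variable [DecidableEq m]

theorem det_smul_inv_eq_adjugate {𝕜 : Type*} [Field 𝕜] (A : Matrix m m 𝕜) (h : A.det ≠ 0) :
    A.det • A⁻¹ = A.adjugate := by
  rw [inv_def, Ring.inverse_eq_inv', smul_smul, mul_inv_cancel₀ h, one_smul]

section CommRing

variable [CommRing R]

theorem det_one_add_vecMulVec (u w : m → R) : (1 + vecMulVec u w).det = 1 + w ⬝ᵥ u := by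
  rw [vecMulVec_eq Unit, det_one_add_replicateCol_mul_replicateRow]

theorem det_updateRow_eq_vecMul_adjugate (A : Matrix m m R) (i : m) (w : m → R) :
    (A.updateRow i w).det = (w ᵥ* A.adjugate) i := by
  rw [← cramer_transpose_apply, cramer_eq_adjugate_mulVec, ← adjugate_transpose, mulVec_transpose]

theorem det_add_vecMulVec (A : Matrix m m R) (u w : m → R) :
    (A + vecMulVec u w).det = A.det + w ⬝ᵥ A.adjugate *ᵥ u := by
  have hpartial : ∀ S : Finset m, (A + vecMulVec (S.piecewise u 0) w).det =
      A.det + ∑ i ∈ S, u i * (A.updateRow i w).det := by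
    intro S
    induction S using Finset.induction_on with
    | empty => simp
    | insert j S hj ih =>
      set B := A + vecMulVec (S.piecewise u 0) w
      have hBj : B j = A j := by ext; simp [B, vecMulVec_apply, hj]
      have hins : A + vecMulVec ((insert j S).piecewise u 0) w =
          B.updateRow j (A j + u j • w) := by
        ext i l
        by_cases hij : i = j
        · subst hij; simp [B, vecMulVec_apply]
        · simp [B, hij, vecMulVec_apply, piecewise_insert_of_ne]
      -- adding multiples of row `j` to the other rows leaves the determinant unchanged
      have hrow : B.updateRow j w =
          (1 + vecMulVec (S.piecewise u 0) (Pi.single j 1)) * A.updateRow j w := by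
        ext i l
        by_cases hij : i = j
        · subst hij; simp [B, hj, Matrix.add_mul, vecMulVec_mul, vecMulVec_apply]
        · simp [B, hij, Matrix.add_mul, vecMulVec_mul, vecMulVec_apply]
      rw [hins, det_updateRow_add, det_updateRow_smul, ← hBj, updateRow_eq_self, hrow, det_mul,
        det_one_add_vecMulVec, single_one_dotProduct, piecewise_eq_of_notMem _ _ _ hj,
        Pi.zero_apply, ih, sum_insert hj]
      ring
  rw [dotProduct_mulVec, dotProduct_comm]
  simpa [dotProduct, det_updateRow_eq_vecMul_adjugate] using hpartial univ

end CommRing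

end Matrix

section PrincipalMinors

variable {n : ℕ}

def principalMinorSum (k : ℕ) (M : Matrix (Fin n) (Fin n) ℝ) : ℝ :=
  ∑ C ∈ univ.powersetCard k, (principalSub M C).det

def principalAdjugateSum (k : ℕ) (M : Matrix (Fin n) (Fin n) ℝ) : Matrix (Fin n) (Fin n) ℝ :=
  ∑ C ∈ univ.powersetCard k, sampMatrix C * (principalSub M C).adjugate * (sampMatrix C)ᵀ

theorem sampMatrix_transpose_mulVec (C : Finset (Fin n)) (u : Fin n → ℝ) :
    (sampMatrix C)ᵀ *ᵥ u = fun q : C => u q := by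
  ext q
  simp [sampMatrix, mulVec, dotProduct]

theorem principalMinorSum_add_vecMulVec (k : ℕ) (M : Matrix (Fin n) (Fin n) ℝ)
    (u w : Fin n → ℝ) :
    principalMinorSum k (M + vecMulVec u w) =
      principalMinorSum k M + w ⬝ᵥ principalAdjugateSum k M *ᵥ u := by
  have hsub : ∀ C, principalSub (M + vecMulVec u w) C =
      principalSub M C + vecMulVec (fun q : C => u q) (fun q : C => w q) := fun C => rfl
  simp only [principalMinorSum, principalAdjugateSum, hsub, det_add_vecMulVec, sum_add_distrib,
    sum_mulVec, dotProduct_sum, dotProduct_mul_mul_transpose_mulVec, sampMatrix_transpose_mulVec]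

open Polynomial in
theorem principalMinorSum_eq_coeff (k : ℕ) (M : Matrix (Fin n) (Fin n) ℝ) :
    principalMinorSum k M = (det (1 + (X : ℝ[X]) • M.map C)).coeff k :=
  (coeff_det_one_add_X_smul_eq_sum_minors M k).symm

open Polynomial in
theorem principalMinorSum_mul_mul (k : ℕ) (M : Matrix (Fin n) (Fin n) ℝ)
    {P Q : Matrix (Fin n) (Fin n) ℝ} (hQP : Q * P = 1) :
    principalMinorSum k (P * M * Q) = principalMinorSum k M := by
  have hPQ : P.map C * Q.map C = (1 : Matrix (Fin n) (Fin n) ℝ[X]) := by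
    rw [← Matrix.map_mul, mul_eq_one_comm.mp hQP]; simp
  have hconj : 1 + (X : ℝ[X]) • (P * M * Q).map C =
      P.map C * (1 + (X : ℝ[X]) • M.map C) * Q.map C := by
    rw [Matrix.map_mul, Matrix.map_mul, Matrix.mul_add, Matrix.add_mul, Matrix.mul_one, hPQ,
      Matrix.mul_smul, Matrix.smul_mul]
  rw [principalMinorSum_eq_coeff, principalMinorSum_eq_coeff, hconj, det_mul, det_mul,
    mul_right_comm, ← det_mul, hPQ, det_one, one_mul]

theorem principalSub_diagonal (d : Fin n → ℝ) (C : Finset (Fin n)) :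
    principalSub (diagonal d) C = diagonal fun q : C => d q := by
  ext p q
  simp only [principalSub, diagonal_apply, Subtype.coe_inj]

theorem sampMatrix_mul_diagonal_mul_transpose (C : Finset (Fin n)) (f : C → ℝ) :
    sampMatrix C * diagonal f * (sampMatrix C)ᵀ =
      diagonal fun ℓ => if h : ℓ ∈ C then f ⟨ℓ, h⟩ else 0 := by
  ext a b
  rw [mul_apply]
  simp only [mul_diagonal, transpose_apply, sampMatrix, diagonal_apply, ite_mul, one_mul, zero_mul]
  by_cases ha : a ∈ C
  · rw [Fintype.sum_eq_single ⟨a, ha⟩ (fun q hq => if_neg (fun h => hq (Subtype.ext h.symm)))]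
    rcases eq_or_ne a b with rfl | hab
    · simp [ha]
    · simp [hab, hab.symm]
  · rw [Fintype.sum_eq_zero _ (fun q : C => if_neg (fun h : a = q => ha (h ▸ q.prop)))]
    simp [ha]

theorem esymmOn_erase_eq_sum_filter_mem {k : ℕ} (hk : 1 ≤ k) (ℓ : Fin n) (d : Fin n → ℝ) :
    esymmOn (univ.erase ℓ) (k - 1) d =
      ∑ C ∈ (univ.powersetCard k).filter (ℓ ∈ ·), ∏ i ∈ C.erase ℓ, d i := by
  refine sum_nbij' (insert ℓ) (·.erase ℓ) ?_ ?_ ?_ ?_ ?_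
  · intro T hT
    simp only [mem_filter, mem_powersetCard, subset_erase] at hT ⊢
    simp [card_insert_of_notMem hT.1.2, hT.2]; omega
  · intro C hC
    simp only [mem_filter, mem_powersetCard, subset_erase] at hC ⊢
    simp [card_erase_of_mem hC.2, hC.1.2]
  · intro T hT
    simp only [mem_powersetCard, subset_erase] at hT
    exact erase_insert hT.1.2
  · intro C hC
    simp only [mem_filter] at hC
    exact insert_erase hC.2
  · intro T hT
    simp only [mem_powersetCard, subset_erase] at hT
    rw [erase_insert hT.1.2]

theorem principalAdjugateSum_diagonal {k : ℕ} (hk : 1 ≤ k) (d : Fin n → ℝ) :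
    principalAdjugateSum k (diagonal d) = diagonal fun ℓ => esymmOn (univ.erase ℓ) (k - 1) d := by
  simp only [principalAdjugateSum, principalSub_diagonal, adjugate_diagonal,
    sampMatrix_mul_diagonal_mul_transpose, univ_eq_attach, prod_erase_attach, dite_eq_ite]
  ext a b
  simp only [Matrix.sum_apply, diagonal_apply, esymmOn_erase_eq_sum_filter_mem hk, sum_filter]
  split_ifs <;> simp

theorem principalAdjugateSum_mul_mul (k : ℕ) (M : Matrix (Fin n) (Fin n) ℝ)
    {P Q : Matrix (Fin n) (Fin n) ℝ} (hQP : Q * P = 1) :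
    principalAdjugateSum k (P * M * Q) = P * principalAdjugateSum k M * Q := by
  have hPQ : P * Q = 1 := mul_eq_one_comm.mp hQP
  have hform : ∀ u w : Fin n → ℝ, w ⬝ᵥ principalAdjugateSum k (P * M * Q) *ᵥ u =
      w ⬝ᵥ (P * principalAdjugateSum k M * Q) *ᵥ u := by
    intro u w
    have hconj : P * M * Q + vecMulVec u w = P * (M + vecMulVec (Q *ᵥ u) (Pᵀ *ᵥ w)) * Q := by
      rw [Matrix.mul_add, Matrix.add_mul, mul_vecMulVec, vecMulVec_mul, mulVec_mulVec, hPQ,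
        one_mulVec, mulVec_transpose, vecMul_vecMul, hPQ, vecMul_one]
    have h := principalMinorSum_add_vecMulVec k (P * M * Q) u w
    rw [hconj, principalMinorSum_mul_mul k _ hQP, principalMinorSum_mul_mul k _ hQP,
      principalMinorSum_add_vecMulVec, add_right_inj] at h
    rw [← h, ← mulVec_mulVec, ← mulVec_mulVec, dotProduct_mulVec w P, mulVec_transpose]
  ext i j
  simpa [single_one_dotProduct, mulVec_single_one] using hform (Pi.single j 1) (Pi.single i 1)

end PrincipalMinors

theorem kdpp_expectation_spectral_general (n : ℕ) (K : Matrix (Fin n) (Fin n) ℝ)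
    (hPD : K.PosDef) (lam : Fin n → ℝ) (v : Fin n → Fin n → ℝ)
    (hortho : ∀ i j, v i ⬝ᵥ v j = if i = j then (1 : ℝ) else 0)
    (hK : K = ∑ ℓ, lam ℓ • vecMulVec (v ℓ) (v ℓ))
    (k : ℕ) (hk1 : 1 ≤ k) :
    ∑ C ∈ Finset.univ.powersetCard k,
        ((principalSub K C).det / esymmOn Finset.univ k lam) •
          (sampMatrix C * (principalSub K C)⁻¹ * (sampMatrix C)ᵀ) =
      ∑ ℓ, (esymmOn (Finset.univ.erase ℓ) (k - 1) lam / esymmOn Finset.univ k lam) •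
        vecMulVec (v ℓ) (v ℓ) := by
  set e := esymmOn Finset.univ k lam
  have hV : of v * (of v)ᵀ = 1 := by
    ext i j
    simpa [mul_apply, dotProduct, one_apply] using hortho i j
  have hadj (C : Finset (Fin n)) :
      (principalSub K C).det • (principalSub K C)⁻¹ = (principalSub K C).adjugate :=
    det_smul_inv_eq_adjugate _ (hPD.submatrix Subtype.val_injective).det_pos.ne'
  calc _ = e⁻¹ • principalAdjugateSum k K := by
        simp only [principalAdjugateSum, smul_sum, div_eq_inv_mul, mul_smul, ← hadj,
          Matrix.mul_smul, Matrix.smul_mul]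
    _ = e⁻¹ • ((of v)ᵀ * diagonal (fun ℓ => esymmOn (univ.erase ℓ) (k - 1) lam) * of v) := by
        rw [hK, ← transpose_of_mul_diagonal_mul_of, principalAdjugateSum_mul_mul k _ hV,
          principalAdjugateSum_diagonal hk1]
    _ = _ := by
        simp only [transpose_of_mul_diagonal_mul_of, smul_sum, div_eq_inv_mul, mul_smul]

/-- Spectral expression for the kDPP expectation:
`E_{C ~ kDPP(K)}[C K_{CC}⁻¹ Cᵀ] = ∑ ℓ, (e_{k−1}(λ̂_ℓ)/e_k(λ)) v_ℓ v_ℓᵀ`. -/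
theorem kdpp_expectation_spectral (n : ℕ) (K : Matrix (Fin n) (Fin n) ℝ)
    (hsymm : K.IsSymm) (hPD : K.PosDef) (lam : Fin n → ℝ) (v : Fin n → Fin n → ℝ)
    (hpos : ∀ ℓ, 0 < lam ℓ)
    (hortho : ∀ i j, v i ⬝ᵥ v j = if i = j then (1 : ℝ) else 0)
    (hK : K = ∑ ℓ, lam ℓ • vecMulVec (v ℓ) (v ℓ))
    (k : ℕ) (hk1 : 1 ≤ k) (hkn : k ≤ n) :
    ∑ C ∈ Finset.univ.powersetCard k,
        ((principalSub K C).det / esymmOn Finset.univ k lam) •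
          (sampMatrix C * (principalSub K C)⁻¹ * (sampMatrix C)ᵀ) =
      ∑ ℓ, (esymmOn (Finset.univ.erase ℓ) (k - 1) lam / esymmOn Finset.univ k lam) •
        vecMulVec (v ℓ) (v ℓ) :=
  kdpp_expectation_spectral_general n K hPD lam v hortho hK k hk1
end

section
/- Let σ_1 ≥ σ_2 ≥ … ≥ σ_n ≥ 0 be real numbers and let k and l be integers with k ≥ l > 0 and k + 1 ≤ n, and assume e_k(σ) > 0. Then e_{k+1}(σ)/e_k(σ) ≤ (1/(k − l + 1)) ∑_{i=l+1}^{n} σ_i, where e_j(σ) denotes the elementary symmetric polynomial of degree j in σ_1,…,σ_n. -/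
open Matrix BigOperators Finset

/-!
Double counting: every `(k+1)`-set `T` has at least `k + 1 - l` elements of index `≥ l`, so
`(k + 1 - l) e_{k+1}` is at most the sum over pairs `(i, T)` with `i ∈ T`, `l ≤ i`, of `∏_T σ`.
Writing `∏_T σ = σ_i ∏_{T \ {i}} σ` and using that `T ↦ T \ {i}` is injective on the sets
containing `i`, that sum is at most `(∑_{l ≤ i} σ_i) e_k`.
-/

section DoubleCounting

variable {ι : Type*} [DecidableEq ι] {s : Finset ι} {f : ι → ℝ}

theorem sum_powersetCard_succ_filter_mem_prod_erase_le (hf : ∀ i ∈ s, 0 ≤ f i) (j : ℕ) (i : ι) :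
    ∑ T ∈ (s.powersetCard (j + 1)).filter (i ∈ ·), ∏ x ∈ T.erase i, f x ≤
      ∑ Q ∈ s.powersetCard j, ∏ x ∈ Q, f x := by
  have hinj : Set.InjOn (·.erase i) ((s.powersetCard (j + 1)).filter (i ∈ ·) : Set (Finset ι)) :=
    fun T hT T' hT' h => by
      rw [← insert_erase (mem_filter.mp hT).2, ← insert_erase (mem_filter.mp hT').2]
      exact congrArg (insert i) h
  rw [← sum_image (f := fun Q => ∏ x ∈ Q, f x) hinj]
  refine sum_le_sum_of_subset_of_nonneg ?_ fun Q hQ _ => ?_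
  · intro Q hQ
    obtain ⟨T, hT, rfl⟩ := mem_image.mp hQ
    obtain ⟨⟨hTs, hTcard⟩, hiT⟩ := by simpa only [mem_filter, mem_powersetCard] using hT
    refine mem_powersetCard.mpr ⟨(erase_subset i T).trans hTs, ?_⟩
    rw [card_erase_of_mem hiT, hTcard, Nat.add_sub_cancel]
  · exact prod_nonneg fun x hx => hf x ((mem_powersetCard.mp hQ).1 hx)

theorem mul_sum_powersetCard_succ_prod_le (hf : ∀ i ∈ s, 0 ≤ f i) (p : ι → Prop)
    [DecidablePred p] {m j : ℕ} (hm : ∀ T ∈ s.powersetCard (j + 1), m ≤ #(T.filter p)) :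
    m * ∑ T ∈ s.powersetCard (j + 1), ∏ x ∈ T, f x ≤
      (∑ i ∈ s.filter p, f i) * ∑ Q ∈ s.powersetCard j, ∏ x ∈ Q, f x := by
  calc m * ∑ T ∈ s.powersetCard (j + 1), ∏ x ∈ T, f x
      ≤ ∑ T ∈ s.powersetCard (j + 1), ∑ i ∈ T.filter p, ∏ x ∈ T, f x := by
        rw [mul_sum]
        refine sum_le_sum fun T hT => ?_
        rw [sum_const, nsmul_eq_mul]
        exact mul_le_mul_of_nonneg_right (by exact_mod_cast hm T hT)
          (prod_nonneg fun x hx => hf x ((mem_powersetCard.mp hT).1 hx))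
    _ = ∑ T ∈ s.powersetCard (j + 1), ∑ i ∈ T.filter p, f i * ∏ x ∈ T.erase i, f x :=
        sum_congr rfl fun T _ => sum_congr rfl fun i hi =>
          (mul_prod_erase T f (mem_filter.mp hi).1).symm
    _ = ∑ i ∈ s.filter p, f i * ∑ T ∈ (s.powersetCard (j + 1)).filter (i ∈ ·),
          ∏ x ∈ T.erase i, f x := by
        simp only [mul_sum]
        refine sum_comm' fun T i => ?_
        simp only [mem_filter, mem_powersetCard]
        exact ⟨fun ⟨hT, hiT, hi⟩ => ⟨⟨hT, hiT⟩, hT.1 hiT, hi⟩,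
          fun ⟨⟨hT, hiT⟩, _, hi⟩ => ⟨hT, hiT, hi⟩⟩
    _ ≤ ∑ i ∈ s.filter p, f i * ∑ Q ∈ s.powersetCard j, ∏ x ∈ Q, f x :=
        sum_le_sum fun i hi => mul_le_mul_of_nonneg_left
          (sum_powersetCard_succ_filter_mem_prod_erase_le hf j i) (hf i (mem_filter.mp hi).1)
    _ = (∑ i ∈ s.filter p, f i) * ∑ Q ∈ s.powersetCard j, ∏ x ∈ Q, f x := (sum_mul ..).symm

end DoubleCounting

theorem Fin.card_filter_val_lt_le {n : ℕ} (T : Finset (Fin n)) (l : ℕ) :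
    #(T.filter fun i : Fin n => (i : ℕ) < l) ≤ l := by
  simpa using card_le_card_of_injOn (t := range l) (fun i : Fin n => (i : ℕ))
    (fun i hi => by simpa using (mem_filter.mp hi).2) (Fin.val_injective.injOn)

theorem Fin.sub_le_card_filter_le_val {n : ℕ} (T : Finset (Fin n)) (l : ℕ) :
    #T - l ≤ #(T.filter fun i : Fin n => l ≤ (i : ℕ)) := by
  have hsplit := card_filter_add_card_filter_not (s := T) (p := fun i : Fin n => l ≤ (i : ℕ))
  simp only [not_le] at hsplit
  have := Fin.card_filter_val_lt_le T l
  omega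

theorem guruswami_sinop_general (n : ℕ) (σ : Fin n → ℝ)
    (hnonneg : ∀ i, 0 ≤ σ i)
    (k l : ℕ) (hlk : l ≤ k)
    (he : 0 < esymmOn Finset.univ k σ) :
    esymmOn Finset.univ (k + 1) σ / esymmOn Finset.univ k σ ≤
      (1 / ((k : ℝ) - l + 1)) *
        ∑ i ∈ Finset.univ.filter (fun i : Fin n => l ≤ (i : ℕ)), σ i := by
  have key := mul_sum_powersetCard_succ_prod_le (s := univ) (fun i _ => hnonneg i)
    (fun i : Fin n => l ≤ (i : ℕ)) (m := k + 1 - l) (j := k) fun T hT => by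
      simpa [(mem_powersetCard.mp hT).2] using Fin.sub_le_card_filter_le_val T l
  have hc : ((k + 1 - l : ℕ) : ℝ) = (k : ℝ) - l + 1 := by
    push_cast [Nat.cast_sub (by omega : l ≤ k + 1)]
    ring
  have hc0 : (0 : ℝ) < (k : ℝ) - l + 1 := by
    rw [← hc]
    exact_mod_cast (by omega : 0 < k + 1 - l)
  rw [hc] at key
  rwa [div_le_iff₀ he, mul_assoc, one_div, le_inv_mul_iff₀ hc0]

/-- Guruswami–Sinop inequality: for `σ_1 ≥ … ≥ σ_n ≥ 0` and integers `k ≥ l > 0`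
with `k + 1 ≤ n` and `e_k(σ) > 0`,
`e_{k+1}(σ)/e_k(σ) ≤ (1/(k − l + 1)) ∑_{i=l+1}^{n} σ_i`.
(Indices of `σ` are 0-based in the formalization, so `∑_{i=l+1}^{n} σ_i` becomes the
sum over indices `i` with `l ≤ i`.) -/
theorem guruswami_sinop (n : ℕ) (σ : Fin n → ℝ)
    (hsort : ∀ i j : Fin n, i ≤ j → σ j ≤ σ i) (hnonneg : ∀ i, 0 ≤ σ i)
    (k l : ℕ) (hl : 0 < l) (hlk : l ≤ k) (hkn : k + 1 ≤ n)
    (he : 0 < esymmOn Finset.univ k σ) :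
    esymmOn Finset.univ (k + 1) σ / esymmOn Finset.univ k σ ≤
      (1 / ((k : ℝ) - l + 1)) *
        ∑ i ∈ Finset.univ.filter (fun i : Fin n => l ≤ (i : ℕ)), σ i :=
  guruswami_sinop_general n σ hnonneg k l hlk he
end

section
/- Let λ_1 ≥ λ_2 ≥ … ≥ λ_n > 0 be real numbers and let 1 ≤ k ≤ n. For each ℓ ∈ {1,…,n}, let λ̂_ℓ ∈ ℝ^{n−1} be the vector (λ_1,…,λ_n) with the entry λ_ℓ removed. Then for every ℓ, e_k(λ̂_ℓ)/e_{k−1}(λ̂_ℓ) ≤ ∑_{i=k}^{n} λ_i. -/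
open Matrix BigOperators Finset

theorem Finset.insert_inj_of_forall_lt {α : Type*} [LinearOrder α] {i j : α} {U V : Finset α}
    (hU : ∀ u ∈ U, u < i) (hV : ∀ v ∈ V, v < j) (h : insert i U = insert j V) :
    i = j ∧ U = V := by
  have hij : i = j := by
    have hi : i ∈ insert j V := h ▸ mem_insert_self i U
    have hj : j ∈ insert i U := h ▸ mem_insert_self j V
    rcases mem_insert.1 hi with hi | hi
    · exact hi
    rcases mem_insert.1 hj with hj | hj
    · exact hj.symm
    exact absurd ((hV i hi).trans (hU j hj)) (lt_irrefl i)
  subst hij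
  refine ⟨rfl, ?_⟩
  rw [← erase_insert (fun hi => lt_irrefl i (hU i hi)), h,
    erase_insert (fun hi => lt_irrefl i (hV i hi))]

theorem Fin.card_le_of_forall_lt {n : ℕ} {U : Finset (Fin n)} {i : Fin n}
    (h : ∀ u ∈ U, u < i) : #U ≤ i := by
  simpa using card_le_card fun u hu => mem_Iio.2 (h u hu)

section esymmOn

variable {n : ℕ} {s : Finset (Fin n)} {f : Fin n → ℝ}

theorem esymmOn_nonneg (hf : ∀ i, 0 ≤ f i) (j : ℕ) : 0 ≤ esymmOn s j f :=
  sum_nonneg fun _ _ => prod_nonneg fun i _ => hf i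

/-- Each `(k+1)`-subset is `insert i U` with `U` a `k`-subset lying strictly below `i`; then
`i` has at least `k` elements below it. -/
theorem esymmOn_succ_le_sum_mul_esymmOn (hf : ∀ i, 0 ≤ f i) (k : ℕ) :
    esymmOn s (k + 1) f ≤
      (∑ i ∈ univ.filter (fun i : Fin n => k ≤ (i : ℕ)), f i) * esymmOn s k f := by
  set P := s.powersetCard k
  set Q := (univ ×ˢ P).filter fun p => ∀ u ∈ p.2, u < p.1
  have hsub : s.powersetCard (k + 1) ⊆ Q.image fun p => insert p.1 p.2 := by
    intro T hT
    obtain ⟨hTs, hTcard⟩ := mem_powersetCard.1 hT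
    have hne : T.Nonempty := card_pos.1 (by omega)
    refine mem_image.2 ⟨(T.max' hne, T.erase (T.max' hne)), ?_, insert_erase (max'_mem T hne)⟩
    refine mem_filter.2 ⟨mem_product.2 ⟨mem_univ _, mem_powersetCard.2 ⟨?_, ?_⟩⟩,
      fun u hu => lt_max'_of_mem_erase_max' T hne hu⟩
    · exact (erase_subset _ _).trans hTs
    · rw [card_erase_of_mem (max'_mem T hne), hTcard, add_tsub_cancel_right]
  have hinj : Set.InjOn (fun p : Fin n × Finset (Fin n) => insert p.1 p.2) Q := by
    intro p hp q hq h
    obtain ⟨h1, h2⟩ := insert_inj_of_forall_lt (mem_filter.1 hp).2 (mem_filter.1 hq).2 h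
    exact Prod.ext h1 h2
  have hQ : Q ⊆ univ.filter (fun i : Fin n => k ≤ (i : ℕ)) ×ˢ P := by
    intro p hp
    obtain ⟨hpP, hlt⟩ := mem_filter.1 hp
    have hcard := (mem_powersetCard.1 (mem_product.1 hpP).2).2
    exact mem_product.2 ⟨mem_filter.2 ⟨mem_univ _, hcard ▸ Fin.card_le_of_forall_lt hlt⟩,
      (mem_product.1 hpP).2⟩
  have hprod_nonneg : ∀ T : Finset (Fin n), 0 ≤ ∏ i ∈ T, f i := fun T =>
    prod_nonneg fun i _ => hf i
  calc esymmOn s (k + 1) f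
      ≤ ∑ T ∈ Q.image (fun p => insert p.1 p.2), ∏ i ∈ T, f i :=
        sum_le_sum_of_subset_of_nonneg hsub fun T _ _ => hprod_nonneg T
    _ = ∑ p ∈ Q, f p.1 * ∏ i ∈ p.2, f i := by
        rw [sum_image hinj]
        refine sum_congr rfl fun p hp => prod_insert fun h => ?_
        exact lt_irrefl _ ((mem_filter.1 hp).2 p.1 h)
    _ ≤ ∑ p ∈ univ.filter (fun i : Fin n => k ≤ (i : ℕ)) ×ˢ P, f p.1 * ∏ i ∈ p.2, f i :=
        sum_le_sum_of_subset_of_nonneg hQ fun p _ _ => mul_nonneg (hf _) (hprod_nonneg _)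
    _ = _ := by rw [esymmOn, sum_mul_sum, sum_product]

end esymmOn

/-- Indices are 0-based, so `∑_{i=k}^{n} λ_i` is the sum over the `i` with `k ≤ i + 1`. -/
theorem esymm_ratio_le_tail_sum_general (n : ℕ) (lam : Fin n → ℝ) (hpos : ∀ i, 0 < lam i)
    (k : ℕ) (hk1 : 1 ≤ k) (ℓ : Fin n) :
    esymmOn (Finset.univ.erase ℓ) k lam / esymmOn (Finset.univ.erase ℓ) (k - 1) lam ≤
      ∑ i ∈ Finset.univ.filter (fun i : Fin n => k ≤ (i : ℕ) + 1), lam i := by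
  have hnonneg : ∀ i, 0 ≤ lam i := fun i => (hpos i).le
  obtain ⟨j, rfl⟩ : ∃ j, k = j + 1 := ⟨k - 1, by omega⟩
  -- `div_le_of_le_mul₀` also covers a zero denominator, where `x / 0 = 0`.
  refine div_le_of_le_mul₀ (esymmOn_nonneg hnonneg _) (sum_nonneg fun i _ => hnonneg i) ?_
  simpa only [add_tsub_cancel_right, add_le_add_iff_right] using
    esymmOn_succ_le_sum_mul_esymmOn hnonneg j

/-- For `λ_1 ≥ … ≥ λ_n > 0` and `1 ≤ k ≤ n`, for every `ℓ`,
`e_k(λ̂_ℓ)/e_{k−1}(λ̂_ℓ) ≤ ∑_{i=k}^{n} λ_i`, where `λ̂_ℓ` is `λ` with the entry `λ_ℓ`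
removed.  (Indices are 0-based in the formalization, so `∑_{i=k}^{n} λ_i` becomes the
sum over indices `i` with `k ≤ i + 1`.) -/
theorem esymm_ratio_le_tail_sum (n : ℕ) (lam : Fin n → ℝ) (hpos : ∀ i, 0 < lam i)
    (hsort : ∀ i j : Fin n, i ≤ j → lam j ≤ lam i)
    (k : ℕ) (hk1 : 1 ≤ k) (hkn : k ≤ n) (ℓ : Fin n) :
    esymmOn (Finset.univ.erase ℓ) k lam / esymmOn (Finset.univ.erase ℓ) (k - 1) lam ≤
      ∑ i ∈ Finset.univ.filter (fun i : Fin n => k ≤ (i : ℕ) + 1), lam i :=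
  esymm_ratio_le_tail_sum_general n lam hpos k hk1 ℓ
end

section
/- Let λ_1 ≥ λ_2 ≥ … ≥ λ_n > 0 be real numbers with n ≥ 2, let 1 ≤ k ≤ n − 1, and let λ̂_n ∈ ℝ^{n−1} denote (λ_1,…,λ_{n−1}). Then e_k(λ̂_n)/e_{k−1}(λ̂_n) ≥ ((n−k)/k) · λ_{n−1} · (λ_{n−1}/λ_1)^{k−1} ≥ 0. -/
/-!
Every `j`-subset of the first `n - 1` entries has product between `λ_{n-1}^j` and `λ_1^j`, so
`e_k(λ̂_n) ≥ C(n-1, k) λ_{n-1}^k` and `e_{k-1}(λ̂_n) ≤ C(n-1, k-1) λ_1^{k-1}`; the ratio of the two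
binomial coefficients is `(n - k) / k`.
-/

open Matrix BigOperators Finset

section

variable {n : ℕ} {s : Finset (Fin n)} {f : Fin n → ℝ}

theorem choose_mul_pow_le_esymmOn {a : ℝ} (ha : 0 ≤ a) (hf : ∀ i ∈ s, a ≤ f i) (j : ℕ) :
    ((#s).choose j : ℝ) * a ^ j ≤ esymmOn s j f := by
  rw [esymmOn, ← card_powersetCard, ← nsmul_eq_mul]
  refine card_nsmul_le_sum _ _ _ fun T hT => ?_
  obtain ⟨hTs, hTcard⟩ := mem_powersetCard.mp hT
  calc a ^ j = ∏ _i ∈ T, a := by rw [prod_const, hTcard]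
    _ ≤ ∏ i ∈ T, f i := prod_le_prod (fun _ _ => ha) fun i hi => hf i (hTs hi)

theorem esymmOn_le_choose_mul_pow {b : ℝ} (hf : ∀ i ∈ s, 0 ≤ f i ∧ f i ≤ b) (j : ℕ) :
    esymmOn s j f ≤ ((#s).choose j : ℝ) * b ^ j := by
  rw [esymmOn, ← card_powersetCard, ← nsmul_eq_mul]
  refine sum_le_card_nsmul _ _ _ fun T hT => ?_
  obtain ⟨hTs, hTcard⟩ := mem_powersetCard.mp hT
  calc ∏ i ∈ T, f i ≤ ∏ _i ∈ T, b :=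
        prod_le_prod (fun i hi => (hf i (hTs hi)).1) fun i hi => (hf i (hTs hi)).2
    _ = b ^ j := by rw [prod_const, hTcard]

theorem esymmOn_pos (hf : ∀ i ∈ s, 0 < f i) {j : ℕ} (hj : j ≤ #s) : 0 < esymmOn s j f :=
  sum_pos (fun _ hT => prod_pos fun i hi => hf i ((mem_powersetCard.mp hT).1 hi))
    (powersetCard_nonempty.mpr hj)

end

theorem Nat.cast_sub_mul_choose_pred {m k : ℕ} (hk : 1 ≤ k) (hkm : k ≤ m + 1) :
    ((m : ℝ) + 1 - k) * m.choose (k - 1) = k * m.choose k := by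
  obtain ⟨j, rfl⟩ := Nat.exists_eq_add_of_le' hk
  have h := congrArg (Nat.cast : ℕ → ℝ) (Nat.choose_succ_right_eq m j)
  push_cast [Nat.cast_sub (by omega : j ≤ m)] at h
  rw [Nat.add_sub_cancel]
  push_cast
  linarith

theorem le_esymmOn_div_esymmOn_pred {n : ℕ} {s : Finset (Fin n)} {f : Fin n → ℝ} {a b : ℝ}
    (ha : 0 < a) (hf : ∀ i ∈ s, a ≤ f i ∧ f i ≤ b) {k : ℕ} (hk : 1 ≤ k) (hks : k ≤ #s) :
    ((#s + 1 - k : ℝ) / k) * a * (a / b) ^ (k - 1) ≤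
      esymmOn s k f / esymmOn s (k - 1) f := by
  have hfpos : ∀ i ∈ s, 0 < f i := fun i hi => ha.trans_le (hf i hi).1
  obtain ⟨i, hi⟩ := card_pos.mp (by omega : 0 < #s)
  have hb : 0 < b := (hfpos i hi).trans_le (hf i hi).2
  have hk0 : (0 : ℝ) < k := by exact_mod_cast hk
  have hc : 0 ≤ ((#s + 1 - k : ℝ) / k) * a * (a / b) ^ (k - 1) := by
    have : (0 : ℝ) ≤ #s + 1 - k := sub_nonneg.mpr (by exact_mod_cast (by omega : k ≤ #s + 1))
    positivity
  have hchoose := Nat.cast_sub_mul_choose_pred hk (by omega : k ≤ #s + 1)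
  have hpow : a * (a / b) ^ (k - 1) * b ^ (k - 1) = a ^ k := by
    rw [div_pow, mul_assoc, div_mul_cancel₀ _ (by positivity), ← pow_succ',
      Nat.sub_add_cancel hk]
  rw [le_div_iff₀ (esymmOn_pos hfpos (by omega))]
  calc ((#s + 1 - k : ℝ) / k) * a * (a / b) ^ (k - 1) * esymmOn s (k - 1) f
      ≤ ((#s + 1 - k : ℝ) / k) * a * (a / b) ^ (k - 1) *
          (((#s).choose (k - 1) : ℝ) * b ^ (k - 1)) :=
        mul_le_mul_of_nonneg_left
          (esymmOn_le_choose_mul_pow (fun i hi => ⟨(hfpos i hi).le, (hf i hi).2⟩) _) hc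
    _ = (#s + 1 - k : ℝ) * (#s).choose (k - 1) / k * (a * (a / b) ^ (k - 1) * b ^ (k - 1)) := by
        ring
    _ = ((#s).choose k : ℝ) * a ^ k := by rw [hchoose, hpow, mul_div_cancel_left₀ _ hk0.ne']
    _ ≤ esymmOn s k f := choose_mul_pow_le_esymmOn ha.le (fun i hi => (hf i hi).1) k

/-- For `λ_1 ≥ … ≥ λ_n > 0`, `n ≥ 2`, `1 ≤ k ≤ n − 1`, and
`λ̂_n = (λ_1, …, λ_{n−1})` (i.e. `λ` with the last entry removed):
`e_k(λ̂_n)/e_{k−1}(λ̂_n) ≥ ((n−k)/k) · λ_{n−1} · (λ_{n−1}/λ_1)^{k−1} ≥ 0`.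
(Indices are 0-based in the formalization: `λ_1 = lam ⟨0,_⟩`, `λ_{n−1} = lam ⟨n−2,_⟩`,
and the last entry is `lam ⟨n−1,_⟩`.) -/
theorem esymm_ratio_lower_bound (n : ℕ) (hn : 2 ≤ n) (lam : Fin n → ℝ)
    (hpos : ∀ i, 0 < lam i)
    (hsort : ∀ i j : Fin n, i ≤ j → lam j ≤ lam i)
    (k : ℕ) (hk1 : 1 ≤ k) (hkn : k ≤ n - 1) :
    (((n : ℝ) - k) / k) * lam ⟨n - 2, by omega⟩ *
        (lam ⟨n - 2, by omega⟩ / lam ⟨0, by omega⟩) ^ (k - 1) ≤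
      esymmOn (Finset.univ.erase ⟨n - 1, by omega⟩) k lam /
        esymmOn (Finset.univ.erase ⟨n - 1, by omega⟩) (k - 1) lam
    ∧ (0 : ℝ) ≤ (((n : ℝ) - k) / k) * lam ⟨n - 2, by omega⟩ *
        (lam ⟨n - 2, by omega⟩ / lam ⟨0, by omega⟩) ^ (k - 1) := by
  set s : Finset (Fin n) := univ.erase ⟨n - 1, by omega⟩
  have hcard : (#s : ℝ) + 1 = n := by
    rw [card_erase_of_mem (mem_univ _), card_univ, Fintype.card_fin,
      Nat.cast_sub (by omega)]
    ring
  have hbounds : ∀ i ∈ s, lam ⟨n - 2, by omega⟩ ≤ lam i ∧ lam i ≤ lam ⟨0, by omega⟩ := by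
    intro i hi
    have : (i : ℕ) ≠ n - 1 := fun h => ne_of_mem_erase hi (Fin.ext h)
    exact ⟨hsort _ _ (Fin.le_def.mpr (by dsimp only; omega)),
      hsort _ _ (Fin.le_def.mpr (Nat.zero_le _))⟩
  have hbound := le_esymmOn_div_esymmOn_pred (hpos _) hbounds hk1 (by simp [s]; omega)
  rw [hcard] at hbound
  refine ⟨hbound, ?_⟩
  have : (0 : ℝ) ≤ n - k := sub_nonneg.mpr (by exact_mod_cast (by omega : k ≤ n))
  have := hpos ⟨n - 2, by omega⟩
  have := hpos ⟨0, by omega⟩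
  positivity
end

section
/- Let λ_1 ≥ λ_2 ≥ … ≥ λ_n > 0 be real numbers, let 1 ≤ k ≤ n, and set α = ∑_{i=k}^{n} λ_i. Then ∑_{i=1}^{n} λ_i/(λ_i + α) ≤ k; equivalently, if K is an n×n real symmetric positive definite matrix with eigenvalues λ_1,…,λ_n, then Tr(K(K + αI)^{-1}) ≤ k. -/
/-!
The terms with `k ≤ i + 1` satisfy `λᵢ / (λᵢ + α) ≤ λᵢ / α` and so sum to at most `1`, while each
of the remaining `k - 1` terms is below `1`. For the matrix form, write `K = Vᵀ diag(λ) V` with `V`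
orthogonal (rows `v ℓ`); then `K (K + αI)⁻¹ = Vᵀ diag(λᵢ / (λᵢ + α)) V`, whose trace is the sum.
-/

open Matrix BigOperators Finset

theorem sum_div_add_sum_le_card_compl_add_one {ι : Type*} [Fintype ι] [DecidableEq ι]
    (lam : ι → ℝ) (hlam : ∀ i, 0 ≤ lam i) (s : Finset ι) (hs : 0 < ∑ i ∈ s, lam i) :
    ∑ i, lam i / (lam i + ∑ j ∈ s, lam j) ≤ #sᶜ + 1 := by
  set α := ∑ j ∈ s, lam j
  have h_s : ∑ i ∈ s, lam i / (lam i + α) ≤ 1 :=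
    calc ∑ i ∈ s, lam i / (lam i + α) ≤ ∑ i ∈ s, lam i / α :=
          sum_le_sum fun i _ => div_le_div_of_nonneg_left (hlam i) hs (by linarith [hlam i])
      _ = 1 := by rw [← sum_div, div_self hs.ne']
  have h_compl : ∑ i ∈ sᶜ, lam i / (lam i + α) ≤ #sᶜ := by
    simpa using sum_le_card_nsmul sᶜ (fun i => lam i / (lam i + α)) 1 fun i _ =>
      div_le_one_of_le₀ (by linarith) (by linarith [hlam i])
  rw [← sum_add_sum_compl s]
  linarith

theorem card_compl_filter_le_val_add_one {n k : ℕ} (hkn : k ≤ n) :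
    #(univ.filter fun i : Fin n => k ≤ (i : ℕ) + 1)ᶜ = k - 1 := by
  rw [compl_filter, filter_congr (q := fun i : Fin n => (i : ℕ) < k - 1) (by intros; omega),
    Fin.card_filter_val_lt]
  omega

section OrthogonalConj

variable {ι R : Type*} [Fintype ι] [DecidableEq ι] [CommSemiring R]

theorem sum_smul_vecMulVec_eq_conj_diagonal (v : ι → ι → R) (a : ι → R) :
    ∑ ℓ, a ℓ • vecMulVec (v ℓ) (v ℓ) = (of v)ᵀ * diagonal a * of v := by
  ext i j
  rw [Matrix.mul_apply]
  simp only [Matrix.sum_apply, Matrix.smul_apply, vecMulVec_apply, mul_diagonal,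
    transpose_apply, of_apply, smul_eq_mul]
  exact sum_congr rfl fun _ _ => by ring

theorem of_mul_transpose_eq_one_of_orthonormal {v : ι → ι → R}
    (hv : ∀ i j, v i ⬝ᵥ v j = if i = j then 1 else 0) : of v * (of v)ᵀ = 1 := by
  ext i j
  simpa [Matrix.mul_apply, Matrix.one_apply, dotProduct] using hv i j

variable {V : Matrix ι ι R} (hV : V * Vᵀ = 1)
include hV

theorem conj_diagonal_mul_conj_diagonal (a b : ι → R) :
    Vᵀ * diagonal a * V * (Vᵀ * diagonal b * V) = Vᵀ * diagonal (fun i => a i * b i) * V := by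
  rw [← diagonal_mul_diagonal]
  simp only [Matrix.mul_assoc]
  rw [← Matrix.mul_assoc V, hV, Matrix.one_mul]

theorem trace_conj_diagonal (a : ι → R) : (Vᵀ * diagonal a * V).trace = ∑ i, a i := by
  rw [trace_mul_cycle, hV, Matrix.one_mul, trace_diagonal]

theorem conj_diagonal_add_smul_one (a : ι → R) (c : R) :
    Vᵀ * diagonal a * V + c • 1 = Vᵀ * diagonal (fun i => a i + c) * V := by
  rw [← diagonal_add, Matrix.mul_add, Matrix.add_mul, ← smul_one_eq_diagonal,
    Matrix.mul_smul, Matrix.smul_mul, Matrix.mul_one, mul_eq_one_comm.mp hV]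

end OrthogonalConj

section OrthogonalConjInv

variable {ι 𝕜 : Type*} [Fintype ι] [DecidableEq ι] [Field 𝕜]
variable {V : Matrix ι ι 𝕜} (hV : V * Vᵀ = 1)
include hV

theorem inv_conj_diagonal {a : ι → 𝕜} (ha : ∀ i, a i ≠ 0) :
    (Vᵀ * diagonal a * V)⁻¹ = Vᵀ * diagonal (fun i => (a i)⁻¹) * V := by
  refine inv_eq_right_inv ?_
  simp only [conj_diagonal_mul_conj_diagonal hV, mul_inv_cancel₀ (ha _), diagonal_one,
    Matrix.mul_one, mul_eq_one_comm.mp hV]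

theorem trace_conj_diagonal_mul_inv_add_smul_one {a : ι → 𝕜} {c : 𝕜} (hac : ∀ i, a i + c ≠ 0) :
    (Vᵀ * diagonal a * V * (Vᵀ * diagonal a * V + c • 1)⁻¹).trace = ∑ i, a i / (a i + c) := by
  rw [conj_diagonal_add_smul_one hV, inv_conj_diagonal hV hac,
    conj_diagonal_mul_conj_diagonal hV, trace_conj_diagonal hV]
  simp only [div_eq_mul_inv]

end OrthogonalConjInv

theorem expected_size_le_k_general (n : ℕ) (lam : Fin n → ℝ) (hpos : ∀ i, 0 < lam i)
    (k : ℕ) (hk1 : 1 ≤ k) (hkn : k ≤ n)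
    (α : ℝ) (hα : α = ∑ i ∈ Finset.univ.filter (fun i : Fin n => k ≤ (i : ℕ) + 1), lam i) :
    (∑ i, lam i / (lam i + α) ≤ (k : ℝ)) ∧
      ∀ (K : Matrix (Fin n) (Fin n) ℝ) (v : Fin n → Fin n → ℝ),
        K.IsSymm → K.PosDef →
        (∀ i j, v i ⬝ᵥ v j = if i = j then (1 : ℝ) else 0) →
        K = ∑ ℓ, lam ℓ • vecMulVec (v ℓ) (v ℓ) →
        (K * (K + α • (1 : Matrix (Fin n) (Fin n) ℝ))⁻¹).trace ≤ (k : ℝ) := by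
  have hα_pos : 0 < α :=
    hα ▸ sum_pos (fun i _ => hpos i)
      ⟨⟨k - 1, by omega⟩, by simp only [mem_filter, mem_univ, true_and]; omega⟩
  have h_sum : ∑ i, lam i / (lam i + α) ≤ k := by
    have h := sum_div_add_sum_le_card_compl_add_one lam (fun i => (hpos i).le) _ (hα ▸ hα_pos)
    rw [card_compl_filter_le_val_add_one hkn, ← hα, Nat.cast_sub hk1] at h
    push_cast at h
    linarith
  refine ⟨h_sum, fun K v _ _ hv hK => ?_⟩
  rw [hK, sum_smul_vecMulVec_eq_conj_diagonal, trace_conj_diagonal_mul_inv_add_smul_one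
    (of_mul_transpose_eq_one_of_orthonormal hv) fun i => (add_pos (hpos i) hα_pos).ne']
  exact h_sum

/-- For `λ_1 ≥ … ≥ λ_n > 0`, `1 ≤ k ≤ n`, and `α = ∑_{i=k}^{n} λ_i`:
`∑_i λ_i/(λ_i + α) ≤ k`; equivalently, for any real symmetric positive definite `K`
with these eigenvalues (orthonormal eigenvectors `v`), `Tr(K (K + αI)⁻¹) ≤ k`.
(Indices are 0-based in the formalization, so `∑_{i=k}^{n} λ_i` becomes the sum over
indices `i` with `k ≤ i + 1`.) -/
theorem expected_size_le_k (n : ℕ) (lam : Fin n → ℝ) (hpos : ∀ i, 0 < lam i)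
    (hsort : ∀ i j : Fin n, i ≤ j → lam j ≤ lam i)
    (k : ℕ) (hk1 : 1 ≤ k) (hkn : k ≤ n)
    (α : ℝ) (hα : α = ∑ i ∈ Finset.univ.filter (fun i : Fin n => k ≤ (i : ℕ) + 1), lam i) :
    (∑ i, lam i / (lam i + α) ≤ (k : ℝ)) ∧
      ∀ (K : Matrix (Fin n) (Fin n) ℝ) (v : Fin n → Fin n → ℝ),
        K.IsSymm → K.PosDef →
        (∀ i j, v i ⬝ᵥ v j = if i = j then (1 : ℝ) else 0) →
        K = ∑ ℓ, lam ℓ • vecMulVec (v ℓ) (v ℓ) →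
        (K * (K + α • (1 : Matrix (Fin n) (Fin n) ℝ))⁻¹).trace ≤ (k : ℝ) :=
  expected_size_le_k_general n lam hpos k hk1 hkn α hα
end
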